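/- arXiv:2601.17392 — 2 statements merged into one kernel-verified Lean document; each statement's English description precedes it below -/
import Mathlib

section
/- For every n ≥ 0 and all positive semidefinite P, Q ∈ ℝ^{d×d}: Φ_n(P) − Φ_n(Q) = 𝓔_n(P) (P − Q) 𝓔_n(Q)ᵀ. -/
open Matrix

noncomputable section

/-- The Riccati map `Φ(P) := A (I + P S)⁻¹ P Aᵀ + R`. -/
def Ricc {d : ℕ} (A S R P : Matrix (Fin d) (Fin d) ℝ) : Matrix (Fin d) (Fin d) ℝ :=
  A * (1 + P * S)⁻¹ * P * Aᵀ + R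

/-- The map `𝓔(P) := A (I + P S)⁻¹`. -/
def Emat {d : ℕ} (A S P : Matrix (Fin d) (Fin d) ℝ) : Matrix (Fin d) (Fin d) ℝ :=
  A * (1 + P * S)⁻¹

/-- The directed products `𝓔₀(P) := I`, `𝓔_{n+1}(P) := 𝓔_n(Φ(P)) 𝓔(P)`. -/
def Edir {d : ℕ} (A S R : Matrix (Fin d) (Fin d) ℝ) :
    ℕ → Matrix (Fin d) (Fin d) ℝ → Matrix (Fin d) (Fin d) ℝ
  | 0, _ => 1
  | n + 1, P => Edir A S R n (Ricc A S R P) * Emat A S P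

/-!
The push-through identity `(1 + P S)⁻¹ P = P (1 + S P)⁻¹` and `P - Q = P (1 + S Q) - (1 + P S) Q`
give the one-step identity `Φ(P) - Φ(Q) = 𝓔(P) (P - Q) 𝓔(Q)ᵀ` as soon as `1 + P S` and `1 + Q S`
are invertible. For positive semidefinite `P = X* X` and `S`, the Weinstein–Aronszajn identity
turns `det (1 + P S)` into `det (1 + X S X*)`, the determinant of a positive definite matrix.
Since `Φ` preserves positive semidefiniteness, the one-step identity iterates along both orbits.
-/

namespace Matrix

variable {n α 𝕜 : Type*} [Fintype n] [DecidableEq n]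

section CommRing

variable [CommRing α] {P Q S : Matrix n n α}

theorem inv_one_add_mul_mul_comm (P S : Matrix n n α) :
    (1 + P * S)⁻¹ * P = P * (1 + S * P)⁻¹ := by
  by_cases h : IsUnit (1 + P * S).det
  · have h' : IsUnit (1 + S * P).det := det_one_add_mul_comm P S ▸ h
    calc (1 + P * S)⁻¹ * P = (1 + P * S)⁻¹ * (P * (1 + S * P)) * (1 + S * P)⁻¹ := by
          rw [← Matrix.mul_assoc _ P, mul_nonsing_inv_cancel_right _ _ h']
      _ = (1 + P * S)⁻¹ * ((1 + P * S) * P) * (1 + S * P)⁻¹ := by noncomm_ring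
      _ = P * (1 + S * P)⁻¹ := by rw [nonsing_inv_mul_cancel_left _ _ h]
  -- both inverses are the junk value `0`
  · have h' : ¬IsUnit (1 + S * P).det := det_one_add_mul_comm P S ▸ h
    rw [nonsing_inv_apply_not_isUnit _ h, nonsing_inv_apply_not_isUnit _ h', Matrix.zero_mul,
      Matrix.mul_zero]

theorem inv_one_add_mul_mul_sub (hP : IsUnit (1 + P * S)) (hQ : IsUnit (1 + Q * S)) :
    (1 + P * S)⁻¹ * P - (1 + Q * S)⁻¹ * Q = (1 + P * S)⁻¹ * (P - Q) * (1 + S * Q)⁻¹ := by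
  rw [isUnit_iff_isUnit_det] at hP hQ
  have hQ' : IsUnit (1 + S * Q).det := det_one_add_mul_comm Q S ▸ hQ
  calc (1 + P * S)⁻¹ * P - (1 + Q * S)⁻¹ * Q
      = (1 + P * S)⁻¹ * P * ((1 + S * Q) * (1 + S * Q)⁻¹)
        - (1 + P * S)⁻¹ * (1 + P * S) * Q * (1 + S * Q)⁻¹ := by
        rw [mul_nonsing_inv _ hQ', nonsing_inv_mul _ hP, inv_one_add_mul_mul_comm Q S]
        noncomm_ring
    _ = (1 + P * S)⁻¹ * (P - Q) * (1 + S * Q)⁻¹ := by noncomm_ring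

end CommRing

section RCLike

open scoped MatrixOrder ComplexOrder

variable [RCLike 𝕜] {P S : Matrix n n 𝕜}

theorem PosSemidef.isUnit_one_add_mul (hP : P.PosSemidef) (hS : S.PosSemidef) :
    IsUnit (1 + P * S) := by
  obtain ⟨X, rfl⟩ := CStarAlgebra.nonneg_iff_eq_star_mul_self.mp hP.nonneg
  have hpos : (1 + X * S * Xᴴ).PosDef :=
    PosDef.one.add_posSemidef (hS.mul_mul_conjTranspose_same X)
  rw [isUnit_iff_isUnit_det, Matrix.mul_assoc, det_one_add_mul_comm]
  exact (isUnit_iff_isUnit_det _).mp hpos.isUnit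

theorem PosSemidef.inv_one_add_mul_mul (hP : P.PosSemidef) (hS : S.PosSemidef) :
    ((1 + P * S)⁻¹ * P).PosSemidef := by
  have hSP : IsUnit (1 + S * P).det :=
    det_one_add_mul_comm P S ▸ (isUnit_iff_isUnit_det _).mp (hP.isUnit_one_add_mul hS)
  have hadj : (1 + P * S)⁻¹ᴴ = (1 + S * P)⁻¹ := by
    rw [conjTranspose_nonsing_inv, conjTranspose_add, conjTranspose_mul, hP.isHermitian.eq,
      hS.isHermitian.eq, conjTranspose_one]
  have hsum : (P + Pᴴ * S * P).PosSemidef := hP.add (hS.conjTranspose_mul_mul_same P)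
  rw [hP.isHermitian.eq] at hsum
  have hcongr : (1 + P * S)⁻¹ * P = (1 + P * S)⁻¹ * (P + P * S * P) * (1 + P * S)⁻¹ᴴ :=
    calc (1 + P * S)⁻¹ * P = (1 + P * S)⁻¹ * (P * (1 + S * P)) * (1 + S * P)⁻¹ := by
          rw [← Matrix.mul_assoc _ P, mul_nonsing_inv_cancel_right _ _ hSP]
      _ = (1 + P * S)⁻¹ * (P + P * S * P) * (1 + P * S)⁻¹ᴴ := by rw [hadj]; noncomm_ring
  rw [hcongr]
  exact hsum.mul_mul_conjTranspose_same _

end RCLike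

end Matrix

theorem posSemidef_ricc {d : ℕ} {A S R P : Matrix (Fin d) (Fin d) ℝ} (hR : R.PosSemidef)
    (hS : S.PosSemidef) (hP : P.PosSemidef) : (Ricc A S R P).PosSemidef := by
  have h := (hP.inv_one_add_mul_mul hS).mul_mul_conjTranspose_same A
  rw [conjTranspose_eq_transpose_of_trivial, ← Matrix.mul_assoc] at h
  exact h.add hR

theorem ricc_sub_ricc {d : ℕ} {A S R P Q : Matrix (Fin d) (Fin d) ℝ}
    (hS : S.IsSymm) (hQ : Q.IsSymm) (hPS : IsUnit (1 + P * S)) (hQS : IsUnit (1 + Q * S)) :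
    Ricc A S R P - Ricc A S R Q = Emat A S P * (P - Q) * (Emat A S Q)ᵀ := by
  have hEQ : (Emat A S Q)ᵀ = (1 + S * Q)⁻¹ * Aᵀ := by
    rw [Emat, transpose_mul, transpose_nonsing_inv, transpose_add, transpose_mul, hS.eq, hQ.eq,
      transpose_one]
  calc Ricc A S R P - Ricc A S R Q = A * ((1 + P * S)⁻¹ * P - (1 + Q * S)⁻¹ * Q) * Aᵀ := by
        simp only [Ricc]; noncomm_ring
    _ = Emat A S P * (P - Q) * (Emat A S Q)ᵀ := by
        rw [inv_one_add_mul_mul_sub hPS hQS, hEQ, Emat]; simp only [Matrix.mul_assoc]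

theorem iterate_ricc_sub_iterate_ricc {d : ℕ} {A S R : Matrix (Fin d) (Fin d) ℝ}
    (hR : R.PosSemidef) (hS : S.PosSemidef) (n : ℕ) {P Q : Matrix (Fin d) (Fin d) ℝ}
    (hP : P.PosSemidef) (hQ : Q.PosSemidef) :
    (Ricc A S R)^[n] P - (Ricc A S R)^[n] Q = Edir A S R n P * (P - Q) * (Edir A S R n Q)ᵀ := by
  induction n generalizing P Q with
  | zero => simp [Edir]
  | succ n ih =>
    rw [Function.iterate_succ_apply, Function.iterate_succ_apply,
      ih (posSemidef_ricc hR hS hP) (posSemidef_ricc hR hS hQ),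
      ricc_sub_ricc (isHermitian_iff_isSymm.mp hS.isHermitian)
        (isHermitian_iff_isSymm.mp hQ.isHermitian) (hP.isUnit_one_add_mul hS)
        (hQ.isUnit_one_add_mul hS)]
    simp only [Edir, transpose_mul, Matrix.mul_assoc]

theorem statement6_general {d d₀ : ℕ}
    (A : Matrix (Fin d) (Fin d) ℝ) (B : Matrix (Fin d₀) (Fin d) ℝ)
    (R : Matrix (Fin d) (Fin d) ℝ) (R₀ : Matrix (Fin d₀) (Fin d₀) ℝ)
    (hR : R.PosDef) (hR₀ : R₀.PosDef)
    (S : Matrix (Fin d) (Fin d) ℝ) (hSdef : S = Bᵀ * R₀⁻¹ * B)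
    (n : ℕ) (P Q : Matrix (Fin d) (Fin d) ℝ) (hP : P.PosSemidef) (hQ : Q.PosSemidef) :
    (Ricc A S R)^[n] P - (Ricc A S R)^[n] Q =
      Edir A S R n P * (P - Q) * (Edir A S R n Q)ᵀ := by
  have hS : S.PosSemidef := by
    simpa only [hSdef, conjTranspose_eq_transpose_of_trivial] using
      hR₀.posSemidef.inv.conjTranspose_mul_mul_same B
  exact iterate_ricc_sub_iterate_ricc hR.posSemidef hS n hP hQ

/-- With `S := Bᵀ R₀⁻¹ B`, Riccati semigroup `Φ₀ = id`,
`Φ_{n+1} = Φ ∘ Φ_n` and directed products `𝓔_n`, for every `n ≥ 0` and all positive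
semidefinite `P, Q`: `Φ_n(P) − Φ_n(Q) = 𝓔_n(P) (P − Q) 𝓔_n(Q)ᵀ`. -/
theorem statement6 {d d₀ : ℕ} (hd : 1 ≤ d) (hd₀ : 1 ≤ d₀)
    (A : Matrix (Fin d) (Fin d) ℝ) (B : Matrix (Fin d₀) (Fin d) ℝ)
    (R : Matrix (Fin d) (Fin d) ℝ) (R₀ : Matrix (Fin d₀) (Fin d₀) ℝ)
    (hR : R.PosDef) (hR₀ : R₀.PosDef)
    (S : Matrix (Fin d) (Fin d) ℝ) (hSdef : S = Bᵀ * R₀⁻¹ * B)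
    (n : ℕ) (P Q : Matrix (Fin d) (Fin d) ℝ) (hP : P.PosSemidef) (hQ : Q.PosSemidef) :
    (Ricc A S R)^[n] P - (Ricc A S R)^[n] Q =
      Edir A S R n P * (P - Q) * (Edir A S R n Q)ᵀ :=
  statement6_general A B R R₀ hR hR₀ S hSdef n P Q hP hQ
end
end

section
/- Suppose P∞ ∈ ℝ^{d×d} is a positive definite matrix with Φ(P∞) = P∞. Then for every n ≥ 1, 𝒢_n ≥ α₋(P∞)·S in Loewner order, where α₋(P∞) := (1 + λ₁(P∞)λ₁(S))⁻¹ and λ₁ denotes the largest eigenvalue. -/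
/-!
Every term of the Grammian is a congruence of `𝓕(P∞) = S (I + P∞ S)⁻¹`, so once `𝓕(P∞)` is
positive semidefinite, `𝒢_n ≥ 𝓕(P∞)` for `n ≥ 1`. Writing `S = L²` with `L = S^{1/2}`, the
push-through identity gives `S (I + P S)⁻¹ = L (I + L P L)⁻¹ L`, and
`I + L P L ≤ (1 + λ₁(P) λ₁(S)) I` since `L P L ≤ λ₁(P) S ≤ λ₁(P) λ₁(S) I`. Inverting reverses
the Loewner order, and conjugating back by `L` gives `𝓕(P∞) ≥ α₋(P∞) S`.
-/

open Matrix

noncomputable section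

/-- The largest eigenvalue `λ₁` of a symmetric matrix, via the Rayleigh
variational characterization. -/
def lamMax {d : ℕ} (M : Matrix (Fin d) (Fin d) ℝ) : ℝ :=
  sSup {r | ∃ x : Fin d → ℝ, x ⬝ᵥ x = 1 ∧ r = x ⬝ᵥ M.mulVec x}

open scoped MatrixOrder

section Rayleigh

variable {d : ℕ}

theorem bddAbove_rayleigh (M : Matrix (Fin d) (Fin d) ℝ) :
    BddAbove {r | ∃ x : Fin d → ℝ, x ⬝ᵥ x = 1 ∧ r = x ⬝ᵥ M.mulVec x} := by
  have hsub : {x : Fin d → ℝ | x ⬝ᵥ x = 1} ⊆ Metric.closedBall 0 1 := fun x hx => by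
    rw [mem_closedBall_zero_iff, pi_norm_le_iff_of_nonneg zero_le_one]
    intro i
    rw [Real.norm_eq_abs, ← sq_le_one_iff_abs_le_one, sq, ← hx]
    exact Finset.single_le_sum (f := fun j => x j * x j) (fun j _ => mul_self_nonneg _)
      (Finset.mem_univ i)
  have hcont : Continuous fun x : Fin d → ℝ => x ⬝ᵥ M *ᵥ x := by fun_prop
  obtain ⟨c, hc⟩ := (isCompact_closedBall (0 : Fin d → ℝ) 1).bddAbove_image hcont.continuousOn
  exact ⟨c, fun r ⟨x, hx, hr⟩ => hr ▸ hc ⟨x, hsub hx, rfl⟩⟩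

theorem dotProduct_mulVec_le_lamMax_mul (M : Matrix (Fin d) (Fin d) ℝ) (x : Fin d → ℝ) :
    x ⬝ᵥ M *ᵥ x ≤ lamMax M * (x ⬝ᵥ x) := by
  rcases eq_or_ne x 0 with rfl | hx
  · simp
  have hpos : 0 < x ⬝ᵥ x := by simpa using dotProduct_star_self_pos_iff.mpr hx
  set s := √(x ⬝ᵥ x)
  have hs : s ^ 2 = x ⬝ᵥ x := Real.sq_sqrt hpos.le
  have hs0 : s ≠ 0 := (Real.sqrt_pos.mpr hpos).ne'
  have hunit : (s⁻¹ • x) ⬝ᵥ (s⁻¹ • x) = 1 := by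
    rw [smul_dotProduct, dotProduct_smul, ← hs, smul_eq_mul, smul_eq_mul]
    field_simp
  have hle := le_csSup (bddAbove_rayleigh M) ⟨s⁻¹ • x, hunit, rfl⟩
  rw [mulVec_smul, smul_dotProduct, dotProduct_smul, smul_eq_mul, smul_eq_mul, ← mul_assoc,
    ← sq, inv_pow, hs, inv_mul_le_iff₀ hpos, mul_comm] at hle
  exact hle

theorem lamMax_nonneg {M : Matrix (Fin d) (Fin d) ℝ} (hM : M.PosSemidef) : 0 ≤ lamMax M :=
  Real.sSup_nonneg fun _ ⟨x, _, hr⟩ => hr ▸ by simpa using hM.dotProduct_mulVec_nonneg x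

theorem one_add_lamMax_mul_lamMax_pos {P S : Matrix (Fin d) (Fin d) ℝ} (hP : P.PosSemidef)
    (hS : S.PosSemidef) : 0 < 1 + lamMax P * lamMax S := by
  have := mul_nonneg (lamMax_nonneg hP) (lamMax_nonneg hS)
  positivity

theorem le_lamMax_smul_one {M : Matrix (Fin d) (Fin d) ℝ} (hM : M.IsHermitian) :
    M ≤ lamMax M • 1 := by
  refine PosSemidef.of_dotProduct_mulVec_nonneg
    ((isHermitian_one.smul (IsSelfAdjoint.all (lamMax M))).sub hM) fun x => ?_
  have := dotProduct_mulVec_le_lamMax_mul M x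
  simp only [star_trivial, sub_mulVec, smul_mulVec, one_mulVec, dotProduct_sub, dotProduct_smul,
    smul_eq_mul]
  linarith

end Rayleigh

namespace Matrix

section PushThrough

variable {n K : Type*} [Fintype n] [DecidableEq n] [Field K]

theorem mul_inv_one_add_mul_comm (X Y : Matrix n n K) :
    X * (1 + Y * X)⁻¹ = (1 + X * Y)⁻¹ * X := by
  by_cases h : IsUnit (1 + X * Y).det
  · have h' : IsUnit (1 + Y * X).det := by rwa [det_one_add_mul_comm]
    have hcomm : (1 + X * Y) * X = X * (1 + Y * X) := by noncomm_ring
    calc X * (1 + Y * X)⁻¹ = (1 + X * Y)⁻¹ * ((1 + X * Y) * X) * (1 + Y * X)⁻¹ := by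
          rw [← mul_assoc, nonsing_inv_mul _ h, one_mul]
      _ = (1 + X * Y)⁻¹ * X := by
          rw [hcomm, ← mul_assoc, mul_assoc _ _ (1 + Y * X)⁻¹, mul_nonsing_inv _ h', mul_one]
  · have h' : ¬IsUnit (1 + Y * X).det := by rwa [det_one_add_mul_comm]
    rw [nonsing_inv_apply_not_isUnit _ h, nonsing_inv_apply_not_isUnit _ h', mul_zero, zero_mul]

end PushThrough

variable {n : Type*} [Fintype n] [DecidableEq n]

theorem smul_one_le_inv_of_le_smul_one {M : Matrix n n ℝ} (hM : M.PosDef) {β : ℝ} (hβ : 0 < β)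
    (h : M ≤ β • 1) : β⁻¹ • 1 ≤ M⁻¹ := by
  set N := β • (1 : Matrix n n ℝ) - M with hN
  have hNpsd : N.PosSemidef := h
  have hMinv : M⁻¹ * M = 1 := nonsing_inv_mul _ (isUnit_iff_ne_zero.mpr hM.det_pos.ne')
  have hMinv' : M * M⁻¹ = 1 := mul_nonsing_inv _ (isUnit_iff_ne_zero.mpr hM.det_pos.ne')
  -- `β (β M⁻¹ - 1) = N M⁻¹ N + N` avoids taking a square root of `M`.
  have key : M⁻¹ - β⁻¹ • 1 = (β ^ 2)⁻¹ • (Nᴴ * M⁻¹ * N + N) := by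
    rw [hNpsd.isHermitian.eq, hN]
    simp only [sub_mul, mul_sub, Matrix.smul_mul, Matrix.mul_smul, one_mul, mul_one, hMinv, hMinv']
    match_scalars <;> field_simp <;> ring
  show (M⁻¹ - β⁻¹ • 1).PosSemidef
  rw [key]
  exact ((hM.inv.posSemidef.conjTranspose_mul_mul_same N).add hNpsd).smul (by positivity)

theorem le_sum_range_transpose_pow_mul_mul_pow {F : Matrix n n ℝ} (hF : 0 ≤ F)
    (E : Matrix n n ℝ) {m : ℕ} (hm : 1 ≤ m) :
    F ≤ ∑ k ∈ Finset.range m, (E ^ k)ᵀ * F * E ^ k := by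
  have hterm : ∀ k ∈ Finset.range m, 0 ≤ (E ^ k)ᵀ * F * E ^ k := fun k _ =>
    nonneg_iff_posSemidef.mpr (nonneg_iff_posSemidef.mp hF |>.conjTranspose_mul_mul_same (E ^ k))
  simpa using Finset.single_le_sum hterm (Finset.mem_range.mpr hm)

end Matrix

theorem smul_le_mul_inv_one_add_mul {d : ℕ} {S P : Matrix (Fin d) (Fin d) ℝ}
    (hS : S.PosSemidef) (hP : P.PosSemidef) :
    (1 + lamMax P * lamMax S)⁻¹ • S ≤ S * (1 + P * S)⁻¹ := by
  set β := 1 + lamMax P * lamMax S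
  have hβ : 0 < β := one_add_lamMax_mul_lamMax_pos hP hS
  set L := CFC.sqrt S
  have hLL : L * L = S := CFC.sqrt_mul_sqrt_self S (nonneg_iff_posSemidef.mpr hS)
  have hL : star L = L := IsSelfAdjoint.of_nonneg (CFC.sqrt_nonneg S)
  set M := 1 + L * P * L
  have hM : M.PosDef := by
    have := hP.conjTranspose_mul_mul_same L
    rw [← star_eq_conjTranspose, hL] at this
    exact PosDef.one.add_posSemidef this
  have hLPL : L * P * L ≤ lamMax P • S := by
    simpa [hL, hLL] using star_left_conjugate_le_conjugate (le_lamMax_smul_one hP.isHermitian) L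
  have hMβ : M ≤ β • 1 := by
    have hSβ : lamMax P • S ≤ lamMax P • lamMax S • (1 : Matrix (Fin d) (Fin d) ℝ) :=
      smul_le_smul_of_nonneg_left (le_lamMax_smul_one hS.isHermitian) (lamMax_nonneg hP)
    calc M ≤ 1 + lamMax P • lamMax S • 1 := add_le_add_right (hLPL.trans hSβ) 1
      _ = β • 1 := by rw [smul_smul, add_smul, one_smul]
  have hF : S * (1 + P * S)⁻¹ = L * M⁻¹ * L := by
    rw [← hLL, mul_assoc, ← mul_assoc P, mul_inv_one_add_mul_comm, ← mul_assoc, ← mul_assoc]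
  calc β⁻¹ • S = star L * (β⁻¹ • 1) * L := by simp [hL, hLL]
    _ ≤ star L * M⁻¹ * L :=
      star_left_conjugate_le_conjugate (smul_one_le_inv_of_le_smul_one hM hβ hMβ) L
    _ = S * (1 + P * S)⁻¹ := by rw [hF, hL]

theorem statement7_general {d d₀ : ℕ}
    (A : Matrix (Fin d) (Fin d) ℝ) (B : Matrix (Fin d₀) (Fin d) ℝ)
    (R₀ : Matrix (Fin d₀) (Fin d₀) ℝ)
    (hR₀ : R₀.PosDef)
    (S : Matrix (Fin d) (Fin d) ℝ) (hSdef : S = Bᵀ * R₀⁻¹ * B)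
    (Pinf : Matrix (Fin d) (Fin d) ℝ) (hPinf : Pinf.PosDef)
    (G : ℕ → Matrix (Fin d) (Fin d) ℝ)
    (hG : ∀ n, G n = ∑ k ∈ Finset.range n,
      ((A * (1 + Pinf * S)⁻¹) ^ k)ᵀ * (S * (1 + Pinf * S)⁻¹) * (A * (1 + Pinf * S)⁻¹) ^ k)
    (n : ℕ) (hn : 1 ≤ n) :
    (G n - (1 + lamMax Pinf * lamMax S)⁻¹ • S).PosSemidef := by
  have hS : S.PosSemidef := hSdef ▸ hR₀.inv.posSemidef.conjTranspose_mul_mul_same B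
  have hF := smul_le_mul_inv_one_add_mul hS hPinf.posSemidef
  have hF₀ : 0 ≤ S * (1 + Pinf * S)⁻¹ :=
    (smul_nonneg (inv_nonneg.mpr (one_add_lamMax_mul_lamMax_pos hPinf.posSemidef hS).le)
      (nonneg_iff_posSemidef.mpr hS)).trans hF
  rw [← le_iff, hG]
  exact hF.trans (le_sum_range_transpose_pow_mul_mul_pow hF₀ _ hn)

/-- With `S := Bᵀ R₀⁻¹ B`, `Φ(P) := A (I + P S)⁻¹ P Aᵀ + R`,
`𝓔(P) := A (I + P S)⁻¹`, `𝓕(P) := S (I + P S)⁻¹` and, for a positive definite fixed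
point `P∞` of `Φ`, the Grammian `𝒢_n := Σ_{0 ≤ k < n} (𝓔(P∞)^k)ᵀ 𝓕(P∞) 𝓔(P∞)^k`:
for every `n ≥ 1`, `𝒢_n ≥ α₋(P∞)·S` in the Loewner order, where
`α₋(P∞) := (1 + λ₁(P∞)λ₁(S))⁻¹`. -/
theorem statement7 {d d₀ : ℕ} (hd : 1 ≤ d) (hd₀ : 1 ≤ d₀)
    (A : Matrix (Fin d) (Fin d) ℝ) (B : Matrix (Fin d₀) (Fin d) ℝ)
    (R : Matrix (Fin d) (Fin d) ℝ) (R₀ : Matrix (Fin d₀) (Fin d₀) ℝ)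
    (hR : R.PosDef) (hR₀ : R₀.PosDef)
    (S : Matrix (Fin d) (Fin d) ℝ) (hSdef : S = Bᵀ * R₀⁻¹ * B)
    (Pinf : Matrix (Fin d) (Fin d) ℝ) (hPinf : Pinf.PosDef)
    (hfix : A * (1 + Pinf * S)⁻¹ * Pinf * Aᵀ + R = Pinf)
    (G : ℕ → Matrix (Fin d) (Fin d) ℝ)
    (hG : ∀ n, G n = ∑ k ∈ Finset.range n,
      ((A * (1 + Pinf * S)⁻¹) ^ k)ᵀ * (S * (1 + Pinf * S)⁻¹) * (A * (1 + Pinf * S)⁻¹) ^ k)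
    (n : ℕ) (hn : 1 ≤ n) :
    (G n - (1 + lamMax Pinf * lamMax S)⁻¹ • S).PosSemidef :=
  statement7_general A B R₀ hR₀ S hSdef Pinf hPinf G hG n hn
end
end
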